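/- arXiv:1906.11497 — 2 statements merged into one kernel-verified Lean document; each statement's English description precedes it below -/
import Mathlib

section
/- If n = 2a + b with 1 ≤ a < b < n/2 and gcd(n,a,b) = 1, then C_n(a,b) is isomorphic to C_n(1,2). -/
/-! Since `n = 2a + b`, the jump `b` is `-2a` modulo `n`, and `gcd(n,a,b) = 1` makes `a` a unit of
`ℤ/nℤ`. Multiplication by `a` is then an isomorphism from the circulant graph with jumps
`{1, -2}` to the one with jumps `{a, -2a} = {a, b}`, and `{1, -2}` gives the same graph as `{1, 2}`. -/

open SimpleGraph

/-- The circulant graph `C_n(S)` on `ℤ/nℤ`: vertices `i, j` are adjacent iff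
`min{|i−j|, n−|i−j|} ∈ S`, i.e. iff `i − j` or `j − i` is congruent mod `n`
to an element of `S ⊆ {1, …, ⌊n/2⌋}`. -/
def circ (n : ℕ) (S : Set ℕ) : SimpleGraph (ZMod n) :=
  SimpleGraph.circulantGraph ((fun s : ℕ => (s : ZMod n)) '' S)

/-- `s` is an independent set of `G`. -/
def IsIndep {V : Type*} (G : SimpleGraph V) (s : Finset V) : Prop :=
  ∀ ⦃u⦄, u ∈ s → ∀ ⦃w⦄, w ∈ s → ¬ G.Adj u w

/-- The independence number `α(G)`. -/
noncomputable def indepNum {V : Type*} [Fintype V] (G : SimpleGraph V) : ℕ :=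
  sSup {k | ∃ s : Finset V, IsIndep G s ∧ s.card = k}

/-- `G` is a W₂ graph: it has at least two vertices and every pair of disjoint
independent sets is contained in a pair of disjoint maximum independent sets. -/
def IsW2 {V : Type*} [Fintype V] (G : SimpleGraph V) : Prop :=
  2 ≤ Fintype.card V ∧
  ∀ A B : Finset V, IsIndep G A → IsIndep G B → Disjoint A B →
    ∃ A' B' : Finset V, A ⊆ A' ∧ B ⊆ B' ∧ Disjoint A' B' ∧
      IsIndep G A' ∧ IsIndep G B' ∧ A'.card = _root_.indepNum G ∧ B'.card = _root_.indepNum G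

/-- The disjoint union of `d` copies of the graph `G`. -/
def copies {V : Type*} (d : ℕ) (G : SimpleGraph V) : SimpleGraph (Fin d × V) where
  Adj p q := p.1 = q.1 ∧ G.Adj p.2 q.2
  symm := ⟨fun p q h => ⟨h.1.symm, h.2.symm⟩⟩
  loopless := ⟨fun p h => G.loopless.irrefl _ h.2⟩

open Pointwise

namespace SimpleGraph

variable {G : Type*} [AddGroup G]

theorem circulantGraph_insert_neg (x : G) (s : Set G) :
    circulantGraph (insert (-x) s) = circulantGraph (insert x s) := by
  ext u v
  have hneg {g h : G} : g - h = -x ↔ h - g = x := by rw [← neg_sub, neg_inj]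
  simp only [circulantGraph_adj, Set.mem_insert_iff, hneg]
  tauto

def circulantGraphSmulIso {Γ : Type*} [Group Γ] [DistribMulAction Γ G] (g : Γ) (s : Set G) :
    circulantGraph s ≃g circulantGraph (g • s) where
  toEquiv := MulAction.toPerm g
  map_rel_iff' {x y} := by
    simp only [circulantGraph_adj, MulAction.toPerm_apply, ← smul_sub, Set.smul_mem_smul_set_iff,
      smul_left_cancel_iff]

end SimpleGraph

theorem stmt_10_general (n a b : ℕ)
    (hn : n = 2 * a + b) (hgcd : Nat.gcd (Nat.gcd n a) b = 1) :
    Nonempty (circ n {a, b} ≃g circ n {1, 2}) := by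
  have hdvd : Nat.gcd n a ∣ b := by
    have hdvd_n : Nat.gcd n a ∣ 2 * a + b := hn ▸ Nat.gcd_dvd_left n a
    exact (Nat.dvd_add_right ((Nat.gcd_dvd_right n a).mul_left 2)).mp hdvd_n
  have hcop : Nat.Coprime a n := by
    rwa [Nat.gcd_eq_left hdvd, Nat.gcd_comm] at hgcd
  have hb : (b : ZMod n) = -2 * a := by
    have : ((2 * a + b : ℕ) : ZMod n) = 0 := hn ▸ ZMod.natCast_self n
    push_cast at this
    linear_combination this
  let u := ZMod.unitOfCoprime a hcop
  have hjumps : u • ({1, -2} : Set (ZMod n)) = {(a : ZMod n), (b : ZMod n)} := by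
    simp [Set.smul_set_insert, Units.smul_def, u, hb, mul_comm]
  have hcirc : circ n {1, 2} = circulantGraph {1, -2} := by
    rw [circ, Set.image_pair, Nat.cast_one, Nat.cast_two, Set.pair_comm,
      ← circulantGraph_insert_neg, Set.pair_comm]
  rw [hcirc, circ, Set.image_pair, ← hjumps]
  exact ⟨(circulantGraphSmulIso u _).symm⟩

theorem stmt_10 (n a b : ℕ) (ha : 1 ≤ a) (hab : a < b) (hb : 2 * b < n)
    (hn : n = 2 * a + b) (hgcd : Nat.gcd (Nat.gcd n a) b = 1) :
    Nonempty (circ n {a, b} ≃g circ n {1, 2}) :=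
  stmt_10_general n a b hn hgcd
end

section
/- If 1 ≤ a < b < n/2 and C_n(a,b) is a W₂ graph, then at least one of the following holds: n = 2a+b, n = a+2b, n = 2a+3b, n = 3a+2b, 2n = 2a+3b, or 2n = 3a+2b. -/
open SimpleGraph

/-!
Put `c = a + b`. The neighbours of `c` in `C_n(a,b)` are `c - a = b` and `c - b = a`, which are
neighbours of `0`, and `c + a`, `c + b`, which are neighbours of `2c`. Unless `2c ≡ ±a` or
`2c ≡ ±b (mod n)`, the vertices `0` and `2c` are not adjacent, so `A = {0, 2c}` is independent
and dominates the neighbourhood of `c`. Any maximum independent set containing `A`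
then contains `c` as well, so the disjoint pair `A`, `{c}` cannot be extended, contradicting W₂.
The bounds `a < b < n/2` turn these four congruences into the six equations.
-/

section IndependentSets

variable {V : Type*} {G : SimpleGraph V}

theorem isIndep_singleton (x : V) : IsIndep G {x} := by
  intro u hu w hw
  rw [Finset.mem_singleton] at hu hw
  subst hu hw
  exact G.loopless.irrefl _

theorem IsIndep.insert [DecidableEq V] {s : Finset V} (hs : IsIndep G s) {x : V}
    (hx : ∀ w ∈ s, ¬ G.Adj x w) : IsIndep G (insert x s) := by
  intro u hu w hw
  rw [Finset.mem_insert] at hu hw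
  rcases hu with rfl | hu <;> rcases hw with rfl | hw
  · exact G.loopless.irrefl _
  · exact hx w hw
  · exact fun h => hx u hu h.symm
  · exact hs hu hw

theorem isIndep_pair [DecidableEq V] {u v : V} (h : ¬ G.Adj u v) : IsIndep G {u, v} :=
  (isIndep_singleton v).insert (by simpa using h)

variable [Fintype V]

theorem IsIndep.card_le_indepNum {s : Finset V} (hs : IsIndep G s) :
    s.card ≤ _root_.indepNum G :=
  le_csSup ⟨Fintype.card V, by rintro k ⟨t, -, rfl⟩; exact t.card_le_univ⟩ ⟨s, hs, rfl⟩

theorem IsIndep.mem_of_card_eq_indepNum {s : Finset V} (hs : IsIndep G s)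
    (hcard : s.card = _root_.indepNum G) {x : V} (hx : ∀ w ∈ s, ¬ G.Adj x w) : x ∈ s := by
  classical
  by_contra hxs
  have := (hs.insert hx).card_le_indepNum
  rw [Finset.card_insert_of_notMem hxs] at this
  omega

theorem IsW2.exists_adj_forall_not_adj {A : Finset V} (hW2 : IsW2 G) (hA : IsIndep G A)
    {x : V} (hxA : x ∉ A) : ∃ s, G.Adj x s ∧ ∀ w ∈ A, ¬ G.Adj w s := by
  obtain ⟨S, T, hAS, hxT, hST, hS, -, hScard, -⟩ :=
    hW2.2 A {x} hA (isIndep_singleton x) (Finset.disjoint_singleton_right.mpr hxA)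
  by_contra! hdom
  have hxS : x ∈ S := hS.mem_of_card_eq_indepNum hScard fun s hs hxs => by
    obtain ⟨w, hw, hws⟩ := hdom s hxs
    exact hS (hAS hw) hs hws
  exact Finset.disjoint_left.mp hST hxS (hxT (Finset.mem_singleton_self x))

end IndependentSets

section Circulant

variable {G : Type*} [AddCommGroup G] {a b : G}

theorem circulantGraph_pair_adj_zero_or_adj_two_nsmul (ha : a ≠ 0) (hb : b ≠ 0) {s : G}
    (hs : (circulantGraph {a, b}).Adj (a + b) s) :
    (circulantGraph {a, b}).Adj 0 s ∨ (circulantGraph {a, b}).Adj (2 • (a + b)) s := by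
  simp only [circulantGraph_adj, Set.mem_insert_iff, Set.mem_singleton_iff] at hs ⊢
  rcases hs.2 with (h | h) | (h | h)
  · obtain rfl : s = b := by grind
    exact Or.inl ⟨hb.symm, by simp⟩
  · obtain rfl : s = a := by grind
    exact Or.inl ⟨ha.symm, by simp⟩
  · obtain rfl : s = 2 • a + b := by grind
    exact Or.inr ⟨fun h => hb (by grind), Or.inl (Or.inr (by abel))⟩
  · obtain rfl : s = a + 2 • b := by grind
    exact Or.inr ⟨fun h => ha (by grind), Or.inl (Or.inl (by abel))⟩

theorem circulantGraph_pair_adj_zero_two_nsmul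
    (h : (circulantGraph {a, b}).Adj 0 (2 • (a + b))) :
    2 • a + b = 0 ∨ a + 2 • b = 0 ∨ 2 • a + 3 • b = 0 ∨ 3 • a + 2 • b = 0 := by
  simp only [circulantGraph_adj, Set.mem_insert_iff, Set.mem_singleton_iff] at h
  grind

theorem IsW2.circulantGraph_pair [Fintype G] (hW2 : IsW2 (circulantGraph {a, b}))
    (ha : a ≠ 0) (hb : b ≠ 0) (hab : a + b ≠ 0) :
    2 • a + b = 0 ∨ a + 2 • b = 0 ∨ 2 • a + 3 • b = 0 ∨ 3 • a + 2 • b = 0 := by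
  classical
  by_contra! hrel
  have hA : IsIndep (circulantGraph {a, b}) {0, 2 • (a + b)} :=
    isIndep_pair fun h => by grind [circulantGraph_pair_adj_zero_two_nsmul h]
  have hc : a + b ∉ ({0, 2 • (a + b)} : Finset G) := by
    simp only [Finset.mem_insert, Finset.mem_singleton, not_or]
    exact ⟨hab, fun h => hab (by grind)⟩
  obtain ⟨s, hcs, hundominated⟩ := hW2.exists_adj_forall_not_adj hA hc
  rcases circulantGraph_pair_adj_zero_or_adj_two_nsmul ha hb hcs with h | h
  · exact hundominated 0 (by simp) h
  · exact hundominated _ (by simp) h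

end Circulant

theorem eq_or_eq_two_mul_of_dvd {n k : ℕ} (hk : n ∣ k) (hk0 : 0 < k) (hkn : k < 3 * n) :
    k = n ∨ k = 2 * n := by
  obtain ⟨m, rfl⟩ := hk
  have : m < 3 := by nlinarith
  interval_cases m <;> omega

theorem stmt_12_general (n a b : ℕ) [NeZero n] (ha : 1 ≤ a) (hab : a < b)
    (hb : 2 * b < n)
    (hW2 : IsW2 (circ n {a, b})) :
    n = 2 * a + b ∨ n = a + 2 * b ∨ n = 2 * a + 3 * b ∨ n = 3 * a + 2 * b ∨
      2 * n = 2 * a + 3 * b ∨ 2 * n = 3 * a + 2 * b := by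
  have hcast_ne : ∀ k : ℕ, 0 < k → k < n → (k : ZMod n) ≠ 0 := fun k hk0 hkn hk =>
    absurd (Nat.le_of_dvd hk0 ((ZMod.natCast_eq_zero_iff k n).mp hk)) (by omega)
  rw [circ, Set.image_pair] at hW2
  have hrel := hW2.circulantGraph_pair (hcast_ne a (by omega) (by omega))
    (hcast_ne b (by omega) (by omega)) (by exact_mod_cast hcast_ne (a + b) (by omega) (by omega))
  have hdvd : n ∣ 2 * a + b ∨ n ∣ a + 2 * b ∨ n ∣ 2 * a + 3 * b ∨ n ∣ 3 * a + 2 * b := by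
    simpa only [← ZMod.natCast_eq_zero_iff, nsmul_eq_mul, Nat.cast_add, Nat.cast_mul,
      Nat.cast_ofNat] using hrel
  rcases hdvd with h | h | h | h <;>
    obtain h | h := eq_or_eq_two_mul_of_dvd h (by omega) (by omega) <;> omega

theorem stmt_12 (n a b : ℕ) [NeZero n] (ha : 1 ≤ a) (hab : a < b)
    (hb : 2 * b < n) (hgcd : Nat.gcd (Nat.gcd n a) b = 1)
    (hW2 : IsW2 (circ n {a, b})) :
    n = 2 * a + b ∨ n = a + 2 * b ∨ n = 2 * a + 3 * b ∨ n = 3 * a + 2 * b ∨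
      2 * n = 2 * a + 3 * b ∨ 2 * n = 3 * a + 2 * b :=
  stmt_12_general n a b ha hab hb hW2
end
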